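/- Let ρ and ρ' be quantum states on ℂ^N with eigen-decompositions ρ = Σᵢ aᵢ|aᵢ⟩⟨aᵢ| and ρ' = Σᵢ gᵢ|gᵢ⟩⟨gᵢ|. Then Σ_{i,j} min(aᵢ|⟨aᵢ|gⱼ⟩|², gⱼ|⟨aᵢ|gⱼ⟩|²) ≥ 1 − 2(1 − F(ρ,ρ'))^{1/4}, where F denotes fidelity. -/

import Mathlib

/-!
Write `F = ‖√ρ √ρ'‖₁` and `A = ρ^{1/4}`, `B = ρ'^{1/4}`. If `W` is the partial isometry of the
polar decomposition of `A²B²`, then `F = Re tr ((AWB)ᴴ (AB))`. Cauchy–Schwarz for the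
Hilbert–Schmidt inner product, applied once to this pairing and once to
`‖AWB‖₂² = Re tr ((WB²Wᴴ)ᴴ A²)`, together with the fact that compressing by the projection `WᴴW`
does not increase `‖B²‖₂`, gives `F² ≤ Re tr (√ρ √ρ') · √(tr ρ) · √(tr ρ') = Re tr (√ρ √ρ')`.

In the eigenbases, `Re tr (√ρ √ρ') = ∑ √(pᵢⱼ qᵢⱼ)` is the Bhattacharyya coefficient `β` of the
probability distributions `pᵢⱼ = aᵢ |⟨aᵢ|gⱼ⟩|²` and `qᵢⱼ = gⱼ |⟨aᵢ|gⱼ⟩|²`, whose overlap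
`∑ min (pᵢⱼ, qᵢⱼ)` equals `1 - ‖p - q‖₁ / 2`. Writing `|p - q| = |√p - √q| (√p + √q)`,
Cauchy–Schwarz gives `‖p - q‖₁² ≤ 4 (1 - β²) ≤ 4 (1 - F⁴) ≤ 16 (1 - F)`, and
`√(1 - F) ≤ (1 - F)^{1/4}`.
-/

open Matrix
open scoped Kronecker ComplexOrder

noncomputable section

def mfun {n : Type*} [Fintype n] [DecidableEq n] (f : ℝ → ℝ) (A : Matrix n n ℂ) : Matrix n n ℂ :=
  if h : A.IsHermitian then
    h.eigenvectorUnitary.1 * Matrix.diagonal (fun i => (f (h.eigenvalues i) : ℂ)) *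
      (star h.eigenvectorUnitary.1)
  else 0

def psqrt {n : Type*} [Fintype n] [DecidableEq n] (A : Matrix n n ℂ) : Matrix n n ℂ :=
  mfun Real.sqrt A

def mlog {n : Type*} [Fintype n] [DecidableEq n] (A : Matrix n n ℂ) : Matrix n n ℂ :=
  mfun Real.log A

def traceNorm {n : Type*} [Fintype n] [DecidableEq n] (A : Matrix n n ℂ) : ℝ :=
  ((psqrt (Aᴴ * A)).trace).re

def fid {n : Type*} [Fintype n] [DecidableEq n] (ρ σ : Matrix n n ℂ) : ℝ :=
  traceNorm (psqrt ρ * psqrt σ)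

def vNEntropy {n : Type*} [Fintype n] [DecidableEq n] (A : Matrix n n ℂ) : ℝ :=
  - ((A * mlog A).trace).re

def relEnt {n : Type*} [Fintype n] [DecidableEq n] (ρ σ : Matrix n n ℂ) : ℝ :=
  ((ρ * mlog ρ).trace - (ρ * mlog σ).trace).re

open scoped MatrixOrder

section HilbertSchmidt
variable {n : Type*} [Fintype n]

lemma re_trace_conjTranspose_mul_self_nonneg (X : Matrix n n ℂ) : 0 ≤ (Xᴴ * X).trace.re :=
  (Complex.nonneg_iff.mp (posSemidef_conjTranspose_mul_self X).trace_nonneg).1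

lemma re_trace_conjTranspose_mul_le (X Y : Matrix n n ℂ) :
    (Xᴴ * Y).trace.re ≤ √(Xᴴ * X).trace.re * √(Yᴴ * Y).trace.re := by
  classical
  -- `toMatrixInnerProductSpace 1` is the Hilbert–Schmidt inner product `⟪X, Y⟫ = tr (Y Xᴴ)`.
  let _ := toMatrixSeminormedAddCommGroup (1 : Matrix n n ℂ) PosSemidef.one
  let _ := toMatrixInnerProductSpace (1 : Matrix n n ℂ) PosSemidef.one
  have h := re_inner_le_norm (𝕜 := ℂ) X Y
  rw [norm_eq_sqrt_re_inner (𝕜 := ℂ) X, norm_eq_sqrt_re_inner (𝕜 := ℂ) Y] at h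
  change RCLike.re (Y * 1 * Xᴴ).trace ≤
    √(RCLike.re (X * 1 * Xᴴ).trace) * √(RCLike.re (Y * 1 * Yᴴ).trace) at h
  simpa only [RCLike.re_to_complex, mul_one, trace_mul_comm _ Xᴴ, trace_mul_comm _ Yᴴ] using h

lemma re_trace_mul_mul_mul_le_of_idempotent {T P : Matrix n n ℂ} (hT : Tᴴ = T) (hP : Pᴴ = P)
    (hPP : P * P = P) : (T * P * T * P).trace.re ≤ (T * T).trace.re := by
  -- The difference of the two sides is `‖T - P T P‖₂²`.
  have h := re_trace_conjTranspose_mul_self_nonneg (T - P * T * P)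
  have hself : (T - P * T * P)ᴴ = T - P * T * P := by
    simp only [conjTranspose_sub, conjTranspose_mul, hT, hP, mul_assoc]
  have hexp : (T - P * T * P) * (T - P * T * P) =
      T * T - T * P * T * P - P * (T * P * T) + P * (T * P * T * P) := by
    have : P * T * P * (P * T * P) = P * (T * P * T * P) := by
      simp only [← mul_assoc, mul_assoc _ P P, hPP]
    rw [sub_mul, mul_sub, mul_sub, this]
    noncomm_ring
  rw [hself, hexp, trace_add, trace_sub, trace_sub, trace_mul_comm P, trace_mul_comm P,
    mul_assoc _ P P, hPP] at h
  simpa using h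

lemma re_trace_conj_partialIsometry_le {T W : Matrix n n ℂ} (hT : Tᴴ = T)
    (hW : Wᴴ * W * (Wᴴ * W) = Wᴴ * W) :
    ((W * T * Wᴴ)ᴴ * (W * T * Wᴴ)).trace.re ≤ (T * T).trace.re := by
  have hcyc : ((W * T * Wᴴ)ᴴ * (W * T * Wᴴ)).trace = (T * (Wᴴ * W) * T * (Wᴴ * W)).trace := by
    simp only [conjTranspose_mul, conjTranspose_conjTranspose, hT, mul_assoc]
    rw [trace_mul_comm W]
    simp only [mul_assoc]
  rw [hcyc]
  exact re_trace_mul_mul_mul_le_of_idempotent hT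
    (by rw [conjTranspose_mul, conjTranspose_conjTranspose]) hW

end HilbertSchmidt

section FunctionalCalculus
variable {n : Type*} [Fintype n] [DecidableEq n]

lemma mfun_eq_cfc {A : Matrix n n ℂ} (hA : A.IsHermitian) (f : ℝ → ℝ) : mfun f A = cfc f A := by
  rw [mfun, dif_pos hA, hA.cfc_eq]
  rfl

lemma psqrt_eq_of_mul_self {A B : Matrix n n ℂ} (hB : B.PosSemidef) (h : B * B = A) :
    psqrt A = B := by
  have hBsa : IsSelfAdjoint B := hB.1
  have hBB : (B * B).IsHermitian := by
    simpa only [hB.1.eq] using isHermitian_conjTranspose_mul_self B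
  have hspec : ∀ x ∈ spectrum ℝ B, √(x ^ 2) = x := fun x hx ↦
    Real.sqrt_sq (spectrum_nonneg_of_nonneg (nonneg_iff_posSemidef.mpr hB) hx)
  rw [psqrt, ← h, mfun_eq_cfc hBB, ← sq, ← cfc_pow_id (R := ℝ) B 2, ← cfc_comp' .., cfc_congr hspec,
    cfc_id' ℝ B]

lemma psqrt_posSemidef {A : Matrix n n ℂ} (hA : A.PosSemidef) : (psqrt A).PosSemidef := by
  rw [psqrt, mfun_eq_cfc hA.1, ← nonneg_iff_posSemidef]
  exact cfc_nonneg fun x _ ↦ Real.sqrt_nonneg x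

lemma psqrt_mul_self {A : Matrix n n ℂ} (hA : A.PosSemidef) : psqrt A * psqrt A = A := by
  have hAsa : IsSelfAdjoint A := hA.1
  rw [psqrt, mfun_eq_cfc hA.1, ← cfc_mul ..]
  exact (cfc_congr fun x hx ↦ Real.mul_self_sqrt
    (spectrum_nonneg_of_nonneg (nonneg_iff_posSemidef.mpr hA) hx)).trans (cfc_id' ℝ A)

lemma exists_partialIsometry_conjTranspose_mul_eq_psqrt (X : Matrix n n ℂ) :
    ∃ W : Matrix n n ℂ, Wᴴ * X = psqrt (Xᴴ * X) ∧ Wᴴ * W * (Wᴴ * W) = Wᴴ * W := by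
  set H := Xᴴ * X
  have hH : IsSelfAdjoint H := isHermitian_conjTranspose_mul_self X
  have hcont (f : ℝ → ℝ) : ContinuousOn f (spectrum ℝ H) := H.finite_real_spectrum.continuousOn f
  -- `W = X |X|⁺`. The identities `(√t)⁻¹ * t = √t` and `(√t * (√t)⁻¹)² = √t * (√t)⁻¹` used below
  -- hold for every real `t`, because `√t = 0⁻¹ = 0` for `t ≤ 0`.
  set f : ℝ → ℝ := fun t ↦ (√t)⁻¹
  have hfH : cfc f H * H = cfc Real.sqrt H := by
    have h := cfc_mul f (fun t ↦ t) H (hcont f) (hcont _)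
    rw [cfc_id' ℝ H] at h
    rw [← h]
    exact cfc_congr fun t _ ↦ by simp only [f, inv_mul_eq_div, Real.div_sqrt]
  refine ⟨X * cfc f H, ?_, ?_⟩
  all_goals rw [conjTranspose_mul, ← star_eq_conjTranspose, (cfc_predicate f H).star_eq]
  · rw [mul_assoc, psqrt, mfun_eq_cfc hH]
    exact hfH
  · have hP : cfc f H * Xᴴ * (X * cfc f H) = cfc (fun t ↦ √t * (√t)⁻¹) H := by
      rw [mul_assoc, ← mul_assoc Xᴴ, ← mul_assoc, hfH, cfc_mul _ _ H (hcont _) (hcont _)]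
    rw [hP, ← cfc_mul _ _ H (hcont _) (hcont _)]
    refine cfc_congr fun t _ ↦ ?_
    by_cases ht : √t = 0 <;> simp [ht]

end FunctionalCalculus

section Fidelity
variable {n : Type*} [Fintype n] [DecidableEq n]

lemma traceNorm_nonneg (X : Matrix n n ℂ) : 0 ≤ traceNorm X :=
  (Complex.nonneg_iff.mp
    (psqrt_posSemidef (posSemidef_conjTranspose_mul_self X)).trace_nonneg).1

theorem traceNorm_mul_sq_le {A B : Matrix n n ℂ} (hA : Aᴴ = A) (hB : Bᴴ = B) :
    traceNorm (A * A * (B * B)) ^ 2 ≤ (A * A * (B * B)).trace.re *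
      (√(A * A * (A * A)).trace.re * √(B * B * (B * B)).trace.re) := by
  obtain ⟨W, hW, hP⟩ := exists_partialIsometry_conjTranspose_mul_eq_psqrt (A * A * (B * B))
  set Z := W * (B * B) * Wᴴ
  have hF : traceNorm (A * A * (B * B)) = ((A * W * B)ᴴ * (A * B)).trace.re := by
    rw [traceNorm, ← hW, show Wᴴ * (A * A * (B * B)) = Wᴴ * A * A * B * B by
      simp only [mul_assoc], trace_mul_comm]
    simp only [conjTranspose_mul, hA, hB, mul_assoc]
  have hAB : ((A * B)ᴴ * (A * B)).trace = (A * A * (B * B)).trace := by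
    rw [conjTranspose_mul, hA, hB, show B * A * (A * B) = B * (A * A * B) by
      simp only [mul_assoc], trace_mul_comm, mul_assoc]
  have hAWB : ((A * W * B)ᴴ * (A * W * B)).trace = (Zᴴ * (A * A)).trace := by
    rw [show (A * W * B)ᴴ * (A * W * B) = B * Wᴴ * A * A * (W * B) by
      simp only [conjTranspose_mul, hA, hB, mul_assoc], trace_mul_comm]
    simp only [Z, conjTranspose_mul, conjTranspose_conjTranspose, hB, mul_assoc]
  have hAA : (A * A)ᴴ * (A * A) = A * A * (A * A) := by rw [conjTranspose_mul, hA]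
  have hZ : (Zᴴ * Z).trace.re ≤ (B * B * (B * B)).trace.re :=
    re_trace_conj_partialIsometry_le (by rw [conjTranspose_mul, hB]) hP
  have hX : 0 ≤ (A * A * (B * B)).trace.re := hAB ▸ re_trace_conjTranspose_mul_self_nonneg _
  have hY : ((A * W * B)ᴴ * (A * W * B)).trace.re ≤
      √(A * A * (A * A)).trace.re * √(B * B * (B * B)).trace.re := by
    calc ((A * W * B)ᴴ * (A * W * B)).trace.re = (Zᴴ * (A * A)).trace.re := by rw [hAWB]
      _ ≤ √(Zᴴ * Z).trace.re * √((A * A)ᴴ * (A * A)).trace.re :=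
        re_trace_conjTranspose_mul_le _ _
      _ ≤ √(B * B * (B * B)).trace.re * √(A * A * (A * A)).trace.re := by
        rw [hAA]; gcongr
      _ = _ := mul_comm _ _
  have hF' : traceNorm (A * A * (B * B)) ≤
      √((A * W * B)ᴴ * (A * W * B)).trace.re * √(A * A * (B * B)).trace.re := by
    rw [hF, ← hAB]
    exact re_trace_conjTranspose_mul_le _ _
  calc traceNorm (A * A * (B * B)) ^ 2
      ≤ (√((A * W * B)ᴴ * (A * W * B)).trace.re * √(A * A * (B * B)).trace.re) ^ 2 :=
        pow_le_pow_left₀ (traceNorm_nonneg _) hF' 2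
    _ = ((A * W * B)ᴴ * (A * W * B)).trace.re * (A * A * (B * B)).trace.re := by
        rw [mul_pow, Real.sq_sqrt (re_trace_conjTranspose_mul_self_nonneg _), Real.sq_sqrt hX]
    _ ≤ _ := by rw [mul_comm]; exact mul_le_mul_of_nonneg_left hY hX

theorem fid_sq_le {ρ σ : Matrix n n ℂ} (hρ : ρ.PosSemidef) (hσ : σ.PosSemidef) :
    fid ρ σ ^ 2 ≤ (psqrt ρ * psqrt σ).trace.re * (√ρ.trace.re * √σ.trace.re) := by
  have h := traceNorm_mul_sq_le (psqrt_posSemidef (psqrt_posSemidef hρ)).1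
    (psqrt_posSemidef (psqrt_posSemidef hσ)).1
  rwa [psqrt_mul_self (psqrt_posSemidef hρ), psqrt_mul_self (psqrt_posSemidef hσ),
    psqrt_mul_self hρ, psqrt_mul_self hσ] at h

end Fidelity

section Spectral
variable {n : Type*} [Fintype n] [DecidableEq n]

lemma sum_smul_vecMulVec_eq_mul_diagonal_mul_conjTranspose (c : n → ℝ) (v : n → n → ℂ) :
    ∑ i, (c i : ℂ) • vecMulVec (v i) (star (v i)) =
      (of v)ᵀ * diagonal (fun i ↦ (c i : ℂ)) * (of v)ᵀᴴ := by
  ext k l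
  simp only [Matrix.sum_apply, Matrix.smul_apply, vecMulVec_apply, Pi.star_apply, smul_eq_mul,
    mul_apply (M := (of v)ᵀ * diagonal _), mul_diagonal, conjTranspose_apply, transpose_apply,
    of_apply]
  exact Finset.sum_congr rfl fun j _ ↦ by ring

lemma posSemidef_mul_diagonal_mul_conjTranspose (V : Matrix n n ℂ) {c : n → ℝ} (hc : ∀ i, 0 ≤ c i) :
    (V * diagonal (fun i ↦ (c i : ℂ)) * Vᴴ).PosSemidef :=
  (posSemidef_diagonal_iff.mpr fun i ↦ Complex.zero_le_real.mpr (hc i)).mul_mul_conjTranspose_same V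

lemma psqrt_mul_diagonal_mul_conjTranspose {V : Matrix n n ℂ} (hV : Vᴴ * V = 1) {c : n → ℝ}
    (hc : ∀ i, 0 ≤ c i) :
    psqrt (V * diagonal (fun i ↦ (c i : ℂ)) * Vᴴ) = V * diagonal (fun i ↦ (√(c i) : ℂ)) * Vᴴ := by
  set D := diagonal (fun i ↦ (√(c i) : ℂ))
  have hD : D * D = diagonal (fun i ↦ (c i : ℂ)) := by
    rw [diagonal_mul_diagonal]
    congr 1; funext i
    rw [← Complex.ofReal_mul, Real.mul_self_sqrt (hc i)]
  refine psqrt_eq_of_mul_self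
    (posSemidef_mul_diagonal_mul_conjTranspose V fun i ↦ Real.sqrt_nonneg _) ?_
  calc V * D * Vᴴ * (V * D * Vᴴ) = V * D * (Vᴴ * V) * D * Vᴴ := by simp only [mul_assoc]
    _ = _ := by rw [hV, mul_one, mul_assoc V, hD]

lemma trace_mul_diagonal_mul_conjTranspose {V : Matrix n n ℂ} (hV : Vᴴ * V = 1) (c : n → ℂ) :
    (V * diagonal c * Vᴴ).trace = ∑ i, c i := by
  rw [trace_mul_cycle, hV, one_mul, trace_diagonal]

lemma re_trace_diagonal_mul_mul_diagonal_mul_conjTranspose (W : Matrix n n ℂ) (c d : n → ℝ) :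
    (diagonal (fun i ↦ (c i : ℂ)) * W * diagonal (fun j ↦ (d j : ℂ)) * Wᴴ).trace.re =
      ∑ i, ∑ j, c i * d j * ‖W i j‖ ^ 2 := by
  simp only [trace, diag, mul_apply (M := diagonal (fun i ↦ (c i : ℂ)) * W * diagonal _),
    mul_diagonal, diagonal_mul, conjTranspose_apply, Complex.re_sum]
  refine Finset.sum_congr rfl fun i _ ↦ Finset.sum_congr rfl fun j _ ↦ ?_
  rw [RCLike.star_def, mul_right_comm _ (W i j), mul_assoc _ (W i j), Complex.mul_conj']
  norm_cast

lemma sum_norm_sq_apply_eq_one_of_mul_conjTranspose_eq_one {W : Matrix n n ℂ}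
    (hW : W * Wᴴ = 1) (i : n) : ∑ j, ‖W i j‖ ^ 2 = 1 := by
  have h := congr_fun₂ hW i i
  simp only [mul_apply, conjTranspose_apply, one_apply_eq, RCLike.star_def, Complex.mul_conj,
    ← Complex.ofReal_sum, Complex.ofReal_eq_one] at h
  simpa only [Complex.sq_norm] using h

lemma sum_norm_sq_apply_eq_one_of_conjTranspose_mul_eq_one {W : Matrix n n ℂ}
    (hW : Wᴴ * W = 1) (j : n) : ∑ i, ‖W i j‖ ^ 2 = 1 := by
  simpa only [conjTranspose_apply, norm_star] using
    sum_norm_sq_apply_eq_one_of_mul_conjTranspose_eq_one (W := Wᴴ)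
      (by rwa [conjTranspose_conjTranspose]) j

lemma re_trace_mul_diagonal_mul_conjTranspose_mul (V U : Matrix n n ℂ) (c d : n → ℝ) :
    (V * diagonal (fun i ↦ (c i : ℂ)) * Vᴴ * (U * diagonal (fun j ↦ (d j : ℂ)) * Uᴴ)).trace.re =
      ∑ i, ∑ j, c i * d j * ‖(Vᴴ * U) i j‖ ^ 2 := by
  rw [← re_trace_diagonal_mul_mul_diagonal_mul_conjTranspose, conjTranspose_mul,
    conjTranspose_conjTranspose]
  simp only [mul_assoc]
  rw [trace_mul_comm V]
  simp only [mul_assoc]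

theorem fid_sq_le_sum_sqrt {V U : Matrix n n ℂ} (hV : Vᴴ * V = 1) (hU : Uᴴ * U = 1) {a g : n → ℝ}
    (ha : ∀ i, 0 ≤ a i) (hg : ∀ j, 0 ≤ g j) (ha1 : ∑ i, a i = 1) (hg1 : ∑ j, g j = 1) :
    fid (V * diagonal (fun i ↦ (a i : ℂ)) * Vᴴ) (U * diagonal (fun j ↦ (g j : ℂ)) * Uᴴ) ^ 2 ≤
      ∑ i, ∑ j, √(a i * ‖(Vᴴ * U) i j‖ ^ 2 * (g j * ‖(Vᴴ * U) i j‖ ^ 2)) := by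
  have h := fid_sq_le (posSemidef_mul_diagonal_mul_conjTranspose V ha)
    (posSemidef_mul_diagonal_mul_conjTranspose U hg)
  rw [psqrt_mul_diagonal_mul_conjTranspose hV ha, psqrt_mul_diagonal_mul_conjTranspose hU hg,
    re_trace_mul_diagonal_mul_conjTranspose_mul, trace_mul_diagonal_mul_conjTranspose hV,
    trace_mul_diagonal_mul_conjTranspose hU, ← Complex.ofReal_sum, ← Complex.ofReal_sum, ha1,
    hg1] at h
  refine h.trans_eq ?_
  simp only [Complex.ofReal_one, Complex.one_re, Real.sqrt_one, mul_one]
  refine Finset.sum_congr rfl fun i _ ↦ Finset.sum_congr rfl fun j _ ↦ ?_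
  rw [mul_mul_mul_comm, ← sq, Real.sqrt_mul (mul_nonneg (ha i) (hg j)), Real.sqrt_mul (ha i),
    Real.sqrt_sq (by positivity)]

end Spectral

section Classical
variable {ι : Type*} [Fintype ι] {p q : ι → ℝ}

lemma sum_min_eq_one_sub_half_sum_abs_sub (hp1 : ∑ i, p i = 1) (hq1 : ∑ i, q i = 1) :
    ∑ i, min (p i) (q i) = 1 - (∑ i, |p i - q i|) / 2 := by
  have h (i : ι) : min (p i) (q i) = (p i + q i - |p i - q i|) / 2 := by
    linarith [min_add_max (p i) (q i), max_sub_min_eq_abs' (p i) (q i)]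
  simp only [h, ← Finset.sum_div, Finset.sum_sub_distrib, Finset.sum_add_distrib, hp1, hq1]
  ring

lemma sum_sqrt_mul_le_one (hp : ∀ i, 0 ≤ p i) (hq : ∀ i, 0 ≤ q i) (hp1 : ∑ i, p i = 1)
    (hq1 : ∑ i, q i = 1) : ∑ i, √(p i * q i) ≤ 1 := by
  have h (i : ι) : √(p i * q i) ≤ (p i + q i) / 2 := by
    rw [Real.sqrt_mul (hp i)]
    nlinarith [sq_nonneg (√(p i) - √(q i)), Real.sq_sqrt (hp i), Real.sq_sqrt (hq i)]
  calc ∑ i, √(p i * q i) ≤ ∑ i, (p i + q i) / 2 := Finset.sum_le_sum fun i _ ↦ h i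
    _ = 1 := by rw [← Finset.sum_div, Finset.sum_add_distrib, hp1, hq1]; norm_num

lemma sq_sum_abs_sub_le (hp : ∀ i, 0 ≤ p i) (hq : ∀ i, 0 ≤ q i) (hp1 : ∑ i, p i = 1)
    (hq1 : ∑ i, q i = 1) : (∑ i, |p i - q i|) ^ 2 ≤ 4 * (1 - (∑ i, √(p i * q i)) ^ 2) := by
  set B := ∑ i, √(p i * q i)
  have hsq (s : ℝ) : ∑ i, (√(p i) + s * √(q i)) ^ 2 = 1 + s ^ 2 + 2 * s * B := by
    have h (i : ι) : (√(p i) + s * √(q i)) ^ 2 = p i + s ^ 2 * q i + 2 * s * √(p i * q i) := by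
      rw [add_sq, mul_pow, Real.sq_sqrt (hp i), Real.sq_sqrt (hq i), Real.sqrt_mul (hp i)]
      ring
    simp only [h, Finset.sum_add_distrib, ← Finset.mul_sum, hp1, hq1, B]
    ring
  have hfactor (i : ι) : |p i - q i| ^ 2 =
      (√(p i) + -1 * √(q i)) ^ 2 * (√(p i) + 1 * √(q i)) ^ 2 := by
    rw [sq_abs, ← mul_pow]
    congr 1
    linear_combination -Real.sq_sqrt (hp i) + Real.sq_sqrt (hq i)
  calc (∑ i, |p i - q i|) ^ 2
      ≤ (∑ i, (√(p i) + -1 * √(q i)) ^ 2) * ∑ i, (√(p i) + 1 * √(q i)) ^ 2 :=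
        Finset.sum_sq_le_sum_mul_sum_of_sq_le_mul _ (fun _ _ ↦ sq_nonneg _)
          (fun _ _ ↦ sq_nonneg _) fun i _ ↦ (hfactor i).le
    _ = 4 * (1 - B ^ 2) := by rw [hsq, hsq]; ring

theorem one_sub_two_rpow_le_sum_min (hp : ∀ i, 0 ≤ p i) (hq : ∀ i, 0 ≤ q i)
    (hp1 : ∑ i, p i = 1) (hq1 : ∑ i, q i = 1) {F : ℝ} (hF0 : 0 ≤ F)
    (hF : F ^ 2 ≤ ∑ i, √(p i * q i)) :
    1 - 2 * (1 - F) ^ ((1 : ℝ) / 4) ≤ ∑ i, min (p i) (q i) := by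
  set B := ∑ i, √(p i * q i)
  set T := (∑ i, |p i - q i|) / 4
  have hB1 : B ≤ 1 := sum_sqrt_mul_le_one hp hq hp1 hq1
  have hF1 : F ≤ 1 := by nlinarith
  have hT : T ^ 2 ≤ 1 - F := by
    have h := sq_sum_abs_sub_le hp hq hp1 hq1
    have hF4 : F ^ 4 ≤ B ^ 2 := by nlinarith
    simp only [T, div_pow]
    nlinarith [mul_nonneg hF0 (sub_nonneg.mpr hF1), mul_nonneg (sq_nonneg F) (sub_nonneg.mpr hF1)]
  have hroot : T ≤ (1 - F) ^ ((1 : ℝ) / 4) := calc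
    T ≤ √(1 - F) := Real.le_sqrt_of_sq_le hT
    _ = (1 - F) ^ ((1 : ℝ) / 2) := Real.sqrt_eq_rpow _
    _ ≤ (1 - F) ^ ((1 : ℝ) / 4) :=
        Real.rpow_le_rpow_of_exponent_ge' (by linarith) (by linarith) (by norm_num) (by norm_num)
  rw [sum_min_eq_one_sub_half_sum_abs_sub hp1 hq1]
  linarith [show (∑ i, |p i - q i|) / 2 = 2 * T by ring]

end Classical


/-- Σ_{i,j} min(aᵢ|⟨aᵢ|gⱼ⟩|², gⱼ|⟨aᵢ|gⱼ⟩|²) ≥ 1 − 2(1 − F(ρ,ρ'))^{1/4}. -/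
theorem stmt6 {N : ℕ} (ρ ρ' : Matrix (Fin N) (Fin N) ℂ)
    (a g : Fin N → ℝ) (av gv : Fin N → (Fin N → ℂ))
    (hao : ∀ i j, star (av i) ⬝ᵥ av j = if i = j then 1 else 0)
    (hgo : ∀ i j, star (gv i) ⬝ᵥ gv j = if i = j then 1 else 0)
    (hann : ∀ i, 0 ≤ a i) (hgnn : ∀ i, 0 ≤ g i)
    (ha1 : ∑ i, a i = 1) (hg1 : ∑ i, g i = 1)
    (hρ : ρ = ∑ i, (a i : ℂ) • Matrix.vecMulVec (av i) (star (av i)))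
    (hρ' : ρ' = ∑ j, (g j : ℂ) • Matrix.vecMulVec (gv j) (star (gv j))) :
    1 - 2 * (1 - fid ρ ρ') ^ ((1 : ℝ) / 4) ≤
      ∑ i, ∑ j, min (a i * ‖star (av i) ⬝ᵥ gv j‖ ^ 2)
        (g j * ‖star (av i) ⬝ᵥ gv j‖ ^ 2) := by
  -- The columns of `V` and `U` are the eigenvectors, so `(Vᴴ * U) i j` is `star (av i) ⬝ᵥ gv j`
  -- by definition.
  set V := (of av)ᵀ
  set U := (of gv)ᵀ
  have hV : Vᴴ * V = 1 := by ext i j; exact (hao i j).trans Matrix.one_apply.symm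
  have hU : Uᴴ * U = 1 := by ext i j; exact (hgo i j).trans Matrix.one_apply.symm
  have hW : (Vᴴ * U)ᴴ * (Vᴴ * U) = 1 := by
    rw [conjTranspose_mul, conjTranspose_conjTranspose, mul_assoc, ← mul_assoc V,
      mul_eq_one_comm.mp hV, one_mul, hU]
  rw [sum_smul_vecMulVec_eq_mul_diagonal_mul_conjTranspose] at hρ hρ'
  subst hρ hρ'
  set p : Fin N × Fin N → ℝ := fun x ↦ a x.1 * ‖(Vᴴ * U) x.1 x.2‖ ^ 2
  set q : Fin N × Fin N → ℝ := fun x ↦ g x.2 * ‖(Vᴴ * U) x.1 x.2‖ ^ 2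
  have hp1 : ∑ x, p x = 1 := by
    simp only [p, Fintype.sum_prod_type, ← Finset.mul_sum, mul_one, ha1,
      sum_norm_sq_apply_eq_one_of_mul_conjTranspose_eq_one (mul_eq_one_comm.mp hW)]
  have hq1 : ∑ x, q x = 1 := by
    rw [Fintype.sum_prod_type, Finset.sum_comm]
    simp only [q, ← Finset.mul_sum, mul_one, hg1,
      sum_norm_sq_apply_eq_one_of_conjTranspose_mul_eq_one hW]
  have h := one_sub_two_rpow_le_sum_min (fun _ ↦ mul_nonneg (hann _) (sq_nonneg _))
    (fun _ ↦ mul_nonneg (hgnn _) (sq_nonneg _)) hp1 hq1 (traceNorm_nonneg _)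
    (by rw [Fintype.sum_prod_type]; exact fid_sq_le_sum_sqrt hV hU hann hgnn ha1 hg1)
  rwa [Fintype.sum_prod_type] at h
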